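/- For all p ∈ (0,1) and all η ∈ [0, 1−p], one has h_m(p,η) ≤ kl(p+η‖p). -/

import Mathlib

/-!
Both sides vanish at `η = 0`, so it suffices to compare derivatives in `η`. The derivative of
`kl(p + η‖p)` is `log((p + η)/p) + log((1 - p)/(1 - p - η))`; the estimate
`log(a/b) ≥ 2(a - b)/(a + b)` for `a ≥ b > 0` bounds it below by `4η/((2p + η)(2 - 2p - η))`,
and this dominates `∂η h_m(p, η)` by an explicit sum-of-squares identity.
-/

open Real

/-- Bernoulli Kullback–Leibler divergence `kl(a‖b)`. -/
noncomputable def klBer (a b : ℝ) : ℝ :=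
  a * Real.log (a / b) + (1 - a) * Real.log ((1 - a) / (1 - b))

/-- `h_m(p,η) = η² / (2 (p + η/3)(1 - p - η/3))`. -/
noncomputable def hm (p η : ℝ) : ℝ :=
  η ^ 2 / (2 * (p + η / 3) * (1 - p - η / 3))

open Set

lemma two_mul_sub_div_add_le_log_sub_log {a b : ℝ} (hb : 0 < b) (hab : b ≤ a) :
    2 * (a - b) / (a + b) ≤ log a - log b := by
  have ha : 0 < a := hb.trans_le hab
  -- the first term of the series of log((1 + x)/(1 - x)), at x = (a - b)/(a + b)
  set x := (a - b) / (a + b) with hx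
  have hx₀ : 0 ≤ x := div_nonneg (by linarith) (by linarith)
  have hx₁ : x < 1 := (div_lt_one (by linarith)).2 (by linarith)
  have hsum := hasSum_log_sub_log_of_abs_lt_one (abs_lt.2 ⟨by linarith, hx₁⟩)
  have hfirst : 2 * x ≤ log (1 + x) - log (1 - x) := by
    simpa using le_hasSum hsum 0 fun k _ => by positivity
  have hratio : (1 + x) / (1 - x) = a / b := by
    rw [div_eq_div_iff (by linarith) hb.ne', hx]
    field_simp
    ring
  rw [← log_div (by linarith) (by linarith), hratio, log_div ha.ne' hb.ne'] at hfirst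
  rwa [mul_div_assoc]

lemma mul_log_div_eq_sub {c : ℝ} (hc : c ≠ 0) (x : ℝ) :
    x * log (x / c) = x * log x - x * log c := by
  rcases eq_or_ne x 0 with rfl | hx
  · simp
  · rw [log_div hx hc]; ring

lemma klBer_eq_mul_log_sub {a b : ℝ} (hb₀ : b ≠ 0) (hb₁ : b ≠ 1) :
    klBer a b = a * log a + (1 - a) * log (1 - a) - a * log b - (1 - a) * log (1 - b) := by
  rw [klBer, mul_log_div_eq_sub hb₀, mul_log_div_eq_sub (sub_ne_zero.2 hb₁.symm)]
  ring

lemma klBer_self (a : ℝ) : klBer a a = 0 := by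
  rcases eq_or_ne a 0 with rfl | h₀
  · simp [klBer]
  rcases eq_or_ne a 1 with rfl | h₁
  · simp [klBer]
  rw [klBer_eq_mul_log_sub h₀ h₁]; ring

lemma continuous_klBer_left {b : ℝ} (hb₀ : b ≠ 0) (hb₁ : b ≠ 1) : Continuous (klBer · b) := by
  simp_rw [klBer_eq_mul_log_sub hb₀ hb₁]
  have := continuous_mul_log.comp (continuous_sub_left (1 : ℝ))
  exact ((continuous_mul_log.add this).sub (by fun_prop)).sub (by fun_prop)

lemma hasDerivAt_klBer_left {a b : ℝ} (ha₀ : a ≠ 0) (ha₁ : a ≠ 1) (hb₀ : b ≠ 0) (hb₁ : b ≠ 1) :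
    HasDerivAt (klBer · b) (log a - log b - (log (1 - a) - log (1 - b))) a := by
  simp_rw [klBer_eq_mul_log_sub hb₀ hb₁]
  have h₁ := (hasDerivAt_mul_log (sub_ne_zero.2 ha₁.symm)).comp a
    ((hasDerivAt_id a).const_sub 1)
  have := (((hasDerivAt_mul_log ha₀).add h₁).sub ((hasDerivAt_id a).mul_const (log b))).sub
    (((hasDerivAt_id a).const_sub 1).mul_const (log (1 - b)))
  exact this.congr_deriv (by ring)

noncomputable def hmDeriv (p x : ℝ) : ℝ :=
  x * (2 * p * (1 - p) + x / 3 * (1 - 2 * p)) / (2 * (p + x / 3) ^ 2 * (1 - p - x / 3) ^ 2)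

lemma hasDerivAt_hm {p x : ℝ} (hu : p + x / 3 ≠ 0) (hv : 1 - p - x / 3 ≠ 0) :
    HasDerivAt (hm p) (hmDeriv p x) x := by
  have hden : HasDerivAt (fun y => 2 * (p + y / 3) * (1 - p - y / 3))
      (2 * (1 / 3) * (1 - p - x / 3) + 2 * (p + x / 3) * (-(1 / 3))) x :=
    ((((hasDerivAt_id x).div_const 3).const_add p).const_mul 2).mul
      (((hasDerivAt_id x).div_const 3).const_sub (1 - p))
  show HasDerivAt (fun y => y ^ 2 / (2 * (p + y / 3) * (1 - p - y / 3))) _ x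
  refine ((hasDerivAt_pow 2 x).fun_div hden (by simp [hu, hv])).congr_deriv ?_
  rw [hmDeriv]
  field_simp
  ring

lemma hmDeriv_le {p x : ℝ} (hp : 0 < p) (hx₀ : 0 ≤ x) (hx₁ : x < 1 - p) :
    hmDeriv p x ≤ 2 * x / (2 * p + x) + 2 * x / (2 * (1 - p) - x) := by
  have hu : 0 < p + x / 3 := by linarith
  have hv : 0 < 1 - p - x / 3 := by linarith
  have hA : 0 < 2 * p + x := by linarith
  have hB : 0 < 2 * (1 - p) - x := by linarith
  have hsum : 2 * x / (2 * p + x) + 2 * x / (2 * (1 - p) - x) =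
      4 * x / ((2 * p + x) * (2 * (1 - p) - x)) := by
    field_simp; ring
  rw [hsum, hmDeriv, div_le_div_iff₀ (by positivity) (by positivity)]
  have hq : 0 ≤ 1 - p := by linarith
  have hN : 0 ≤ 2 * p * (1 - p) + x / 3 * (1 - 2 * p) := by
    nlinarith [mul_nonneg hp.le (sub_nonneg.2 hx₁.le), mul_nonneg hx₀ hq, mul_nonneg hp.le hq]
  set N := 2 * p * (1 - p) + x / 3 * (1 - 2 * p)
  -- With u = p + x/3, v = 1 - p - x/3 and t = x(v - u)/3 one has N = 2uv - t and
  -- (2p + x)(2(1 - p) - x) = 4uv + 2t - x²/9, so the gap is x(2t² + N x²/9).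
  have hgap : 4 * x * (2 * (p + x / 3) ^ 2 * (1 - p - x / 3) ^ 2)
      - x * N * ((2 * p + x) * (2 * (1 - p) - x))
      = x * (2 * (x * (1 - 2 * p - 2 * x / 3) / 3) ^ 2 + N * x ^ 2 / 9) := by
    ring
  have hgap_nonneg : 0 ≤ x * (2 * (x * (1 - 2 * p - 2 * x / 3) / 3) ^ 2 + N * x ^ 2 / 9) :=
    mul_nonneg hx₀ (add_nonneg (by positivity) (by positivity))
  linarith

lemma monotoneOn_klBer_sub_hm {p : ℝ} (hp : p ∈ Ioo 0 1) :
    MonotoneOn (fun x => klBer (p + x) p - hm p x) (Icc 0 (1 - p)) := by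
  obtain ⟨hp₀, hp₁⟩ := hp
  refine monotoneOn_of_hasDerivWithinAt_nonneg (convex_Icc _ _)
    (f' := fun x => log (p + x) - log p - (log (1 - (p + x)) - log (1 - p)) - hmDeriv p x)
    ?_ ?_ ?_
  · refine ((continuous_klBer_left hp₀.ne' hp₁.ne).comp
      (continuous_const_add p)).continuousOn.sub fun x ⟨hx₀, hx₁⟩ => ?_
    exact (hasDerivAt_hm (by linarith) (by linarith)).continuousAt.continuousWithinAt
  · rw [interior_Icc]
    rintro x ⟨hx₀, hx₁⟩
    exact (((hasDerivAt_klBer_left (by linarith) (by linarith) hp₀.ne' hp₁.ne).comp_const_add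
      p x).sub (hasDerivAt_hm (by linarith) (by linarith))).hasDerivWithinAt
  · rw [interior_Icc]
    rintro x ⟨hx₀, hx₁⟩
    have hleft : 2 * x / (2 * p + x) ≤ log (p + x) - log p := by
      convert two_mul_sub_div_add_le_log_sub_log hp₀ (by linarith : p ≤ p + x) using 2 <;> ring
    have hright : 2 * x / (2 * (1 - p) - x) ≤ log (1 - p) - log (1 - (p + x)) := by
      convert two_mul_sub_div_add_le_log_sub_log (by linarith : 0 < 1 - (p + x))
        (by linarith : 1 - (p + x) ≤ 1 - p) using 2 <;> ring
    linarith [hmDeriv_le hp₀ hx₀.le hx₁]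

/-- **Lemma 8**: for all `p ∈ (0,1)` and `η ∈ [0, 1-p]`,
`h_m(p,η) ≤ kl(p+η‖p)`. -/
theorem hm_le_kl (p : ℝ) (hp : p ∈ Set.Ioo (0 : ℝ) 1)
    (η : ℝ) (hη : η ∈ Set.Icc (0 : ℝ) (1 - p)) :
    hm p η ≤ klBer (p + η) p := by
  have := monotoneOn_klBer_sub_hm hp (left_mem_Icc.2 (by linarith [hp.2])) hη hη.1
  simpa [klBer_self, hm] using this
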